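/- Assume 1 ≤ ε ≤ k−3 and r ∈ {1,2}. Then C_P^{r,ε}(λ)·H_C^ε(λ) equals the block column with k blocks that are all zero except the (k−ε)-th block, which equals P(λ); and G_C^ε(λ)·C_P^{r,ε}(λ) equals the block row with k blocks that are all zero except the (ε+1)-st block, which equals P(λ) (both identities holding for all λ). -/
import Mathlib


open Polynomial Matrix

noncomputable section

/-- `chebP r i` is the `i`-th Chebyshev polynomial of the `r`-th kind (`r ∈ {1,2}`):
`φ_0 = 1`, `φ_1 = X` (first kind) or `2X` (second kind), and
`φ_{i+2} = 2X φ_{i+1} - φ_i`. -/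
def chebP (r : ℕ) : ℕ → Polynomial ℂ
  | 0 => 1
  | 1 => if r = 1 then X else 2 * X
  | (i + 2) => 2 * X * chebP r (i + 1) - chebP r i

/-- The Chebyshev pencil `K^{(C,r)}(λ)` with `rows` block rows, `cols` block columns and
`sz × sz` blocks: row `j` (1-based, `j < rows`) has `I` in column `j`, `-2λ I` in column
`j+1` and `I` in column `j+2`; the last row has `I` in column `rows` and
`-φ_1^{(r)}(λ) I` in column `rows+1`. -/
def KC (r rows cols sz : ℕ) :
    Matrix (Fin rows × Fin sz) (Fin cols × Fin sz) (Polynomial ℂ) :=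
  Matrix.of fun p q =>
    (if (q.1 : ℕ) = (p.1 : ℕ) then 1
      else if (q.1 : ℕ) = (p.1 : ℕ) + 1 then
        (if (p.1 : ℕ) + 1 = rows then -chebP r 1 else -(2 * X))
      else if (q.1 : ℕ) = (p.1 : ℕ) + 2 then 1 else 0) *
    (if p.2 = q.2 then 1 else 0)

/-- `D_1^{(C,r)}(λ)`: block column with `ε+1` blocks whose `i`-th block (1-based) is
`φ_{ε+1-i}^{(r)}(λ) I_n`. -/
def D1C (r ε n : ℕ) : Matrix (Fin (ε + 1) × Fin n) (Fin n) (Polynomial ℂ) :=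
  Matrix.of fun p t => chebP r (ε - (p.1 : ℕ)) * (if p.2 = t then 1 else 0)

/-- `D_2^{(C,r)}(λ)`: block column with `d = k-ε` blocks whose `i`-th block (1-based) is
`φ_{d-i}^{(r)}(λ) I_m`. -/
def D2C (r d m : ℕ) : Matrix (Fin d × Fin m) (Fin m) (Polynomial ℂ) :=
  Matrix.of fun p t => chebP r (d - 1 - (p.1 : ℕ)) * (if p.2 = t then 1 else 0)

/-- The matrix polynomial `P(λ) = Σ_{i=0}^{k} P_i φ_i^{(r)}(λ)` in the Chebyshev basis
of the `r`-th kind. -/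
def PmatC (r k m n : ℕ) (P : ℕ → Matrix (Fin m) (Fin n) ℂ) :
    Matrix (Fin m) (Fin n) (Polynomial ℂ) :=
  ∑ i ∈ Finset.range (k + 1), chebP r i • (P i).map C

/-- The body `M_ε^C(λ)`: `(k-ε) × (ε+1)` block matrix whose first block column is
`2λP_k + P_{k-1}, P_{k-2} - P_k, P_{k-3}, …, P_{ε+1}, P_ε` (top to bottom), whose second
block column is `-P_k, -P_{k-1}, …, -P_{ε+2}, P_{ε-1} - P_{ε+1}` (top to bottom), whose
last block row has `P_{ε-2}, P_{ε-3}, …, P_0` in columns `3, …, ε+1`, and whose other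
blocks are `0` (1-based block indices). -/
def MC (k ε m n : ℕ) (P : ℕ → Matrix (Fin m) (Fin n) ℂ) :
    Matrix (Fin (k - ε) × Fin m) (Fin (ε + 1) × Fin n) (Polynomial ℂ) :=
  Matrix.of fun p q =>
    if (q.1 : ℕ) = 0 then
      (if (p.1 : ℕ) = 0 then 2 * X * C (P k p.2 q.2) + C (P (k - 1) p.2 q.2)
        else if (p.1 : ℕ) = 1 then C (P (k - 2) p.2 q.2) - C (P k p.2 q.2)
        else C (P (k - 1 - (p.1 : ℕ)) p.2 q.2))
    else if (q.1 : ℕ) = 1 then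
      (if (p.1 : ℕ) = k - ε - 1 then C (P (ε - 1) p.2 q.2) - C (P (ε + 1) p.2 q.2)
        else -C (P (k - (p.1 : ℕ)) p.2 q.2))
    else if (p.1 : ℕ) = k - ε - 1 then C (P (ε - (q.1 : ℕ)) p.2 q.2)
    else 0

/-- The colleague Chebyshev pencil
`C_P^{r,ε}(λ) = [[M_ε^C(λ), K_2^{(C,2)}(λ)^T], [K_1^{(C,r)}(λ), 0]]`. -/
def CPre (r k ε m n : ℕ) (P : ℕ → Matrix (Fin m) (Fin n) ℂ) :
    Matrix ((Fin (k - ε) × Fin m) ⊕ (Fin ε × Fin n))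
      ((Fin (ε + 1) × Fin n) ⊕ (Fin (k - 1 - ε) × Fin m)) (Polynomial ℂ) :=
  Matrix.fromBlocks (MC k ε m n P) (KC 2 (k - 1 - ε) (k - ε) m).transpose
    (KC r ε (ε + 1) n) 0

/-- The `i`-th Chebyshev–Horner shift of `P` associated with `e`:
`P_{e,r}^i(λ) = Σ_{j=0}^{i} P_{k-i+j} φ_{e+j}^{(r)}(λ)`. -/
def PHC (r k m n : ℕ) (P : ℕ → Matrix (Fin m) (Fin n) ℂ) (e i : ℕ) :
    Matrix (Fin m) (Fin n) (Polynomial ℂ) :=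
  ∑ j ∈ Finset.range (i + 1), chebP r (e + j) • (P (k - i + j)).map C

/-- `H_C^ε(λ)`: block column with `k` blocks; the top `ε+1` blocks are those of
`D_1^{(C,r)}(λ)` and the remaining `k-ε-1` blocks are, from top to bottom,
`-P_{ε,r}^1(λ), …, -P_{ε,r}^{k-ε-1}(λ)`. -/
def HC (r k ε m n : ℕ) (P : ℕ → Matrix (Fin m) (Fin n) ℂ) :
    Matrix ((Fin (ε + 1) × Fin n) ⊕ (Fin (k - 1 - ε) × Fin m)) (Fin n) (Polynomial ℂ) :=
  Matrix.of fun p t =>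
    match p with
    | Sum.inl q => chebP r (ε - (q.1 : ℕ)) * (if q.2 = t then 1 else 0)
    | Sum.inr q => -PHC r k m n P ε ((q.1 : ℕ) + 1) q.2 t

/-- `G_C^ε(λ)`: block row with `k` blocks; the first `k-ε` blocks are those of
`D_2^{(C,2)}(λ)^T` and the remaining `ε` blocks are, from left to right,
`-P_{0,2}^{k-ε}(λ), …, -P_{0,2}^{k-1}(λ)`. -/
def GC (k ε m n : ℕ) (P : ℕ → Matrix (Fin m) (Fin n) ℂ) :
    Matrix (Fin m) ((Fin (k - ε) × Fin m) ⊕ (Fin ε × Fin n)) (Polynomial ℂ) :=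
  Matrix.of fun s p =>
    match p with
    | Sum.inl q => chebP 2 (k - ε - 1 - (q.1 : ℕ)) * (if s = q.2 then 1 else 0)
    | Sum.inr q => -PHC 2 k m n P 0 (k - ε + (q.1 : ℕ)) s q.2

lemma cheb_two (r i : ℕ) : chebP r (i+2) = 2*X*chebP r (i+1) - chebP r i := by rw [chebP]

lemma cheb_rec (r i : ℕ) : 2*X*chebP r (i+1) = chebP r (i+2) + chebP r i := by
  rw [cheb_two]; ring

lemma cheb21 : chebP 2 1 = 2*X := by rw [chebP]; norm_num

lemma cheb_mul (r i : ℕ) : chebP r 1 * chebP 2 (i+1) = chebP r (i+2) + chebP 2 i := by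
  induction i using Nat.twoStepInduction with
  | zero => rw [cheb21, cheb_two, show chebP 2 0 = 1 from by rw [chebP],
             show chebP r 0 = 1 from by rw [chebP]]; ring
  | one => rw [cheb_two, cheb_two, cheb_two, cheb21, show chebP 2 0 = 1 from by rw [chebP],
             show chebP r 0 = 1 from by rw [chebP]]; ring
  | more i ih1 ih2 =>
          have ih2' : chebP r 1 * chebP 2 (i+2) = chebP r (i+3) + chebP 2 (i+1) := ih2
          show chebP r 1 * chebP 2 (i+3) = chebP r (i+4) + chebP 2 (i+2)
          rw [cheb_two 2 (i+1), cheb_two r (i+2)]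
          simp only [show i+1+1=i+2 from rfl, show i+1+2=i+3 from rfl]
          linear_combination (2*X : Polynomial ℂ) * ih2' - ih1 - cheb_two 2 i

open Finset in
def Hs (k : ℕ) (f : ℕ → Polynomial ℂ) (r e i : ℕ) : Polynomial ℂ :=
  ∑ j ∈ range (i+1), chebP r (e+j) * f (k-i+j)

open Finset in
def Pf (k : ℕ) (f : ℕ → Polynomial ℂ) (r : ℕ) : Polynomial ℂ :=
  ∑ i ∈ range (k+1), chebP r i * f i

section HsLemmas
open Finset
variable (k : ℕ) (f : ℕ → Polynomial ℂ)

lemma Hs_succ (r e i : ℕ) (hi : i < k) :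
    Hs k f r e (i+1) = chebP r e * f (k-(i+1)) + Hs k f r (e+1) i := by
  unfold Hs
  rw [Finset.sum_range_succ']
  rw [add_comm]
  congr 1
  · apply Finset.sum_congr rfl
    intro j hj
    rw [show e+(j+1) = e+1+j from by omega, show k-(i+1)+(j+1) = k-i+j from by omega]

lemma Hs_rec (r e i : ℕ) (hi : i < k) :
    2*X*Hs k f r (e+1) i + chebP r (e+1) * f (k-(i+1))
      = Hs k f r e i + Hs k f r (e+1) (i+1) := by
  rw [Hs_succ k f r (e+1) i hi]
  have : 2*X*Hs k f r (e+1) i = Hs k f r e i + Hs k f r (e+2) i := by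
    unfold Hs
    rw [Finset.mul_sum, ← Finset.sum_add_distrib]
    apply Finset.sum_congr rfl
    intro j hj
    have h1 : 2*X*chebP r (e+j+1) = chebP r (e+j+2) + chebP r (e+j) := cheb_rec r (e+j)
    rw [show e+1+j = e+j+1 from by omega, show e+2+j = e+j+2 from by omega]
    linear_combination f (k-i+j) * h1
  linear_combination this
  -- goal was: 2X*Hs(e+1)i + chebP(e+1)*f(k-(i+1)) = Hs e i + (chebP(e+1)*f(k-(i+1)) + Hs (e+2) i)

lemma Hs0_rec (i : ℕ) (h1 : 1 ≤ i) (h2 : i < k) :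
    2*X*Hs k f 2 0 i + f (k-(i+1)) = Hs k f 2 0 (i+1) + Hs k f 2 0 (i-1) := by
  obtain ⟨i', rfl⟩ : ∃ i', i = i'+1 := ⟨i-1, by omega⟩
  rw [Hs_succ k f 2 0 (i'+1) h2, Hs_succ k f 2 0 i' (by omega)]
  have e1 : chebP 2 0 = 1 := by rw [chebP]
  have hrec := Hs_rec k f 2 0 i' (by omega)
  have hc : chebP 2 (0+1) = 2*X := by rw [show (0+1)=1 from rfl, cheb21]
  simp only [Nat.add_sub_cancel, e1, one_mul]
  rw [hc] at hrec
  linear_combination hrec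
end HsLemmas

section More
open Finset
variable (k : ℕ) (f : ℕ → Polynomial ℂ)

lemma sumCollapse (d b : ℕ) (v : ℕ → Polynomial ℂ) :
    ∑ x ∈ range d, (if x = b then v x else 0) = if b < d then v b else 0 := by
  rw [Finset.sum_ite_eq' (range d) b v]
  simp

lemma tri_split (a x : ℕ) (A B C : Polynomial ℂ) :
    (if a = x then A else if a = x+1 then B else if a = x+2 then C else 0)
    = (if x = a then A else 0) + (if x = a-1 ∧ 1 ≤ a then B else 0)
      + (if x = a-2 ∧ 2 ≤ a then C else 0) := by
  split_ifs <;> (try (exfalso; omega)) <;> ring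

lemma L4 (hk : 2 ≤ k) (r : ℕ) :
    chebP r 1 * Hs k f 2 0 (k-1) - Hs k f 2 0 (k-2) + f 0 = Pf k f r := by
  obtain ⟨k', rfl⟩ : ∃ k', k = k'+2 := ⟨k-2, by omega⟩
  have h1 : Hs (k'+2) f 2 0 (k'+2-1) = ∑ j ∈ range (k'+2), chebP 2 j * f (1+j) := by
    unfold Hs
    rw [show k'+2-1 = k'+1 from rfl]
    apply Finset.sum_congr rfl
    intro j hj
    rw [show (0+j) = j from by omega, show k'+2-(k'+1)+j = 1+j from by omega]
  have h2 : Hs (k'+2) f 2 0 (k'+2-2) = ∑ j ∈ range (k'+1), chebP 2 j * f (2+j) := by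
    unfold Hs
    rw [show k'+2-2 = k' from rfl]
    apply Finset.sum_congr rfl
    intro j hj
    rw [show (0+j) = j from by omega, show k'+2-k'+j = 2+j from by omega]
  rw [h1, h2]
  unfold Pf
  rw [Finset.sum_range_succ' (fun i => chebP r i * f i) (k'+2)]
  rw [Finset.sum_range_succ' (fun i => chebP r (i+1) * f (i+1)) (k'+1)]
  rw [Finset.sum_range_succ' (fun j => chebP 2 j * f (1+j)) (k'+1)]
  rw [mul_add, Finset.mul_sum]
  have e0 : chebP r 0 = 1 := by rw [chebP]
  have e20 : chebP 2 0 = 1 := by rw [chebP]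
  have key : (∑ j ∈ range (k'+1), chebP r 1 * (chebP 2 (j+1) * f (1+(j+1))))
      - ∑ j ∈ range (k'+1), chebP 2 j * f (2+j)
      = ∑ j ∈ range (k'+1), chebP r (j+1+1) * f (j+1+1) := by
    rw [← Finset.sum_sub_distrib]
    apply Finset.sum_congr rfl
    intro j hj
    rw [show 1+(j+1) = j+1+1 from by omega, show 2+j = j+1+1 from by omega]
    linear_combination f (j+1+1) * cheb_mul r j
  rw [e0, e20]
  simp only [show (1+0)=1 from rfl, show (0+1)=1 from rfl]
  linear_combination key
end More

section Scalar
open Finset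

lemma sumCollapse2 (d b : ℕ) (Q : Prop) [Decidable Q] (v : ℕ → Polynomial ℂ) :
    ∑ x ∈ range d, (if x = b ∧ Q then v x else 0) = if b < d ∧ Q then v b else 0 := by
  by_cases hQ : Q
  · simp only [hQ, and_true]; exact sumCollapse d b v
  · simp [hQ]

lemma Hs_one (k : ℕ) (f : ℕ → Polynomial ℂ) (r e : ℕ) (hk : 1 ≤ k) :
    Hs k f r e 1 = chebP r e * f (k-1) + chebP r (e+1) * f k := by
  unfold Hs
  rw [Finset.sum_range_succ, Finset.sum_range_one]
  rw [show e+0 = e from rfl, show k-1+0 = k-1 from rfl, show k-1+1 = k from by omega]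

lemma Hs_two (k : ℕ) (f : ℕ → Polynomial ℂ) (r e : ℕ) (hk : 2 ≤ k) :
    Hs k f r e 2 = chebP r e * f (k-2) + chebP r (e+1) * f (k-1) + chebP r (e+2) * f k := by
  unfold Hs
  rw [Finset.sum_range_succ, Finset.sum_range_succ, Finset.sum_range_one]
  rw [show e+0 = e from rfl, show k-2+0 = k-2 from rfl, show k-2+1 = k-1 from by omega,
      show k-2+2 = k from by omega]

lemma scalar_row2 (ε r : ℕ) (q : ℕ) (hq : q < ε) :
    ∑ c ∈ range (ε+1), (if c = q then (1:Polynomial ℂ)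
        else if c = q+1 then (if q+1 = ε then -chebP r 1 else -(2*X))
        else if c = q+2 then 1 else 0) * chebP r (ε-c) = 0 := by
  have hsplit : ∀ c ∈ range (ε+1), (if c = q then (1:Polynomial ℂ)
        else if c = q+1 then (if q+1 = ε then -chebP r 1 else -(2*X))
        else if c = q+2 then 1 else 0) * chebP r (ε-c)
      = (if c = q then chebP r (ε-c) else 0)
        + (if c = q+1 then (if q+1 = ε then -chebP r 1 else -(2*X)) * chebP r (ε-c) else 0)
        + (if c = q+2 then chebP r (ε-c) else 0) := by
    intro c hc
    split_ifs <;> (try (exfalso; omega)) <;> ring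
  rw [Finset.sum_congr rfl hsplit]
  rw [Finset.sum_add_distrib, Finset.sum_add_distrib, sumCollapse, sumCollapse, sumCollapse]
  rw [if_pos (by omega : q < ε+1), if_pos (by omega : q+1 < ε+1)]
  by_cases h2 : q+2 ≤ ε
  · rw [if_pos (by omega : q+2 < ε+1), if_neg (by omega : ¬ q+1 = ε)]
    obtain ⟨t, ht⟩ : ∃ t, ε-q = t+2 := ⟨ε-q-2, by omega⟩
    rw [ht, show ε-(q+1) = t+1 from by omega, show ε-(q+2) = t from by omega, cheb_two]
    ring
  · rw [if_neg (by omega : ¬ q+2 < ε+1), if_pos (by omega : q+1 = ε)]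
    rw [show ε-q = 1 from by omega, show ε-(q+1) = 0 from by omega,
        show chebP r 0 = 1 from by rw [chebP]]
    ring

lemma scalar_col2 (k ε : ℕ) (hε1 : 1 ≤ ε) (hε2 : ε + 3 ≤ k) (c : ℕ) (hc : c < k-1-ε) :
    ∑ q ∈ range (k-ε), chebP 2 (k-ε-1-q) * (if q = c then (1:Polynomial ℂ)
        else if q = c+1 then (if c+1 = k-1-ε then -chebP 2 1 else -(2*X))
        else if q = c+2 then 1 else 0) = 0 := by
  have hsplit : ∀ q ∈ range (k-ε), chebP 2 (k-ε-1-q) * (if q = c then (1:Polynomial ℂ)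
        else if q = c+1 then (if c+1 = k-1-ε then -chebP 2 1 else -(2*X))
        else if q = c+2 then 1 else 0)
      = (if q = c then chebP 2 (k-ε-1-q) else 0)
        + (if q = c+1 then chebP 2 (k-ε-1-q) * (if c+1 = k-1-ε then -chebP 2 1 else -(2*X)) else 0)
        + (if q = c+2 then chebP 2 (k-ε-1-q) else 0) := by
    intro q hq
    split_ifs <;> (try (exfalso; omega)) <;> ring
  rw [Finset.sum_congr rfl hsplit]
  rw [Finset.sum_add_distrib, Finset.sum_add_distrib, sumCollapse, sumCollapse, sumCollapse]
  rw [if_pos (by omega : c < k-ε), if_pos (by omega : c+1 < k-ε)]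
  by_cases h2 : c+2 ≤ k-ε-1
  · rw [if_pos (by omega : c+2 < k-ε), if_neg (by omega : ¬ c+1 = k-1-ε)]
    obtain ⟨t, ht⟩ : ∃ t, k-ε-1-c = t+2 := ⟨k-ε-1-c-2, by omega⟩
    rw [ht, show k-ε-1-(c+1) = t+1 from by omega, show k-ε-1-(c+2) = t from by omega, cheb_two]
    ring
  · rw [if_neg (by omega : ¬ c+2 < k-ε), if_pos (by omega : c+1 = k-1-ε)]
    rw [show k-ε-1-c = 1 from by omega, show k-ε-1-(c+1) = 0 from by omega,
        show chebP 2 0 = 1 from by rw [chebP], cheb21]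
    ring
end Scalar

section Row1
open Finset

lemma scalar_row1 (k e d r : ℕ) (hkd : k = e+4+d) (f : ℕ → Polynomial ℂ) (q : ℕ)
    (hq : q < d+3) :
    (∑ c ∈ range (e+1+1),
      (if c = 0 then (if q = 0 then 2*X*f k + f (k-1) else if q = 1 then f (k-2) - f k
          else f (k-1-q))
       else if c = 1 then (if q = d+2 then f (e+1-1) - f (e+1+1) else -f (k-q))
       else if q = d+2 then f (e+1-c) else 0) * chebP r (e+1-c))
    + (∑ c ∈ range (d+2),
        (if q = c then (1:Polynomial ℂ)
          else if q = c+1 then (if c+1 = d+2 then -chebP 2 1 else -(2*X))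
          else if q = c+2 then 1 else 0) * -(Hs k f r (e+1) (c+1)))
    = if q = d+2 then Pf k f r else 0 := by
  set A : Polynomial ℂ := (if q = 0 then 2*X*f k + f (k-1) else if q = 1 then f (k-2) - f k
          else f (k-1-q)) with hA
  set B : Polynomial ℂ := (if q = d+2 then f (e+1-1) - f (e+1+1) else -f (k-q)) with hB
  have hsplit1 : ∀ c ∈ range (e+1+1),
      (if c = 0 then A else if c = 1 then B else if q = d+2 then f (e+1-c) else 0)
        * chebP r (e+1-c)
      = (if c = 0 then A * chebP r (e+1-0) else 0) + (if c = 1 then B * chebP r (e+1-1) else 0)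
        + (if 2 ≤ c ∧ q = d+2 then chebP r (e+1-c) * f (e+1-c) else 0) := by
    intro c hc
    split_ifs <;> (try (exfalso; omega)) <;> (subst_vars) <;> ring
  have hsplit2 : ∀ c ∈ range (d+2),
      (if q = c then (1:Polynomial ℂ)
          else if q = c+1 then (if c+1 = d+2 then -chebP 2 1 else -(2*X))
          else if q = c+2 then 1 else 0) * -(Hs k f r (e+1) (c+1))
      = (if c = q then -(Hs k f r (e+1) (c+1)) else 0)
        + (if c = q-1 ∧ 1 ≤ q then
            (if c+1 = d+2 then -chebP 2 1 else -(2*X)) * -(Hs k f r (e+1) (c+1)) else 0)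
        + (if c = q-2 ∧ 2 ≤ q then -(Hs k f r (e+1) (c+1)) else 0) := by
    intro c hc
    split_ifs <;> (try (exfalso; omega)) <;> ring
  rw [Finset.sum_congr rfl hsplit1, Finset.sum_congr rfl hsplit2]
  rw [Finset.sum_add_distrib, Finset.sum_add_distrib, Finset.sum_add_distrib,
      Finset.sum_add_distrib]
  rw [sumCollapse, sumCollapse, sumCollapse, sumCollapse2, sumCollapse2]
  rw [if_pos (by omega : (0:ℕ) < e+1+1), if_pos (by omega : (1:ℕ) < e+1+1)]
  rw [show e+1-0 = e+1 from rfl, show e+1-1 = e from rfl]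
  -- tail sum of first block
  by_cases hqd : q = d+2
  · subst hqd
    rw [if_pos rfl]
    have htail : ∑ c ∈ range (e+1+1), (if 2 ≤ c ∧ d+2 = d+2 then chebP r (e+1-c) * f (e+1-c) else 0)
        = ∑ c ∈ range e, chebP r c * f c := by
      rw [Finset.sum_range_succ', Finset.sum_range_succ']
      rw [if_neg (by omega), if_neg (by omega)]
      have : ∀ c ∈ range e, (if 2 ≤ c+1+1 ∧ d+2 = d+2 then chebP r (e+1-(c+1+1)) * f (e+1-(c+1+1)) else 0)
          = (fun j => chebP r j * f j) (e-1-c) := by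
        intro c hc
        simp only [mem_range] at hc
        rw [if_pos (by omega), show e+1-(c+1+1) = e-1-c from by omega]
      rw [Finset.sum_congr rfl this, Finset.sum_range_reflect (fun j => chebP r j * f j) e]
      ring
    rw [htail]
    -- second block values
    rw [if_neg (by omega : ¬ (d+2 < d+2)), if_pos (by constructor <;> omega : d+2-1 < d+2 ∧ 1 ≤ d+2),
        if_pos (by constructor <;> omega : d+2-2 < d+2 ∧ 2 ≤ d+2)]
    rw [show d+2-1 = d+1 from by omega, show d+2-2 = d from by omega]
    rw [if_pos (by omega : d+1+1 = d+2), cheb21]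
    rw [hA, hB, if_neg (by omega : ¬ d+2 = 0), if_neg (by omega : ¬ d+2 = 1), if_pos rfl]
    rw [show k-1-(d+2) = e+1 from by omega, show e+1-1 = e from rfl, show e+1+1 = e+2 from rfl]
    -- RHS: Pf decomposition
    have hPf : Pf k f r = (∑ c ∈ range e, chebP r c * f c) + chebP r e * f e
        + Hs k f r (e+1) (d+3) := by
      unfold Pf
      rw [show k+1 = (e+1)+(d+4) from by omega]
      rw [Finset.sum_range_add (fun i => chebP r i * f i) (e+1) (d+4)]
      rw [Finset.sum_range_succ (fun i => chebP r i * f i) e]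
      have : ∀ j ∈ range (d+4), chebP r (e+1+j) * f (e+1+j)
          = chebP r (e+1+j) * f (k-(d+3)+j) := by
        intro j hj
        rw [show k-(d+3)+j = e+1+j from by omega]
      unfold Hs
      rw [Finset.sum_congr rfl this]
    rw [hPf]
    have hrec := Hs_rec k f r e (d+2) (by omega)
    have hsucc := Hs_succ k f r e (d+1) (by omega)
    rw [show k-(d+2+1) = e+1 from by omega] at hrec
    rw [show k-(d+1+1) = e+2 from by omega] at hsucc
    rw [show d+1+1 = d+2 from rfl] at hsucc
    rw [show d+2+1 = d+3 from rfl] at hrec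
    linear_combination hrec + hsucc
  · rw [if_neg hqd]
    have htail : ∑ c ∈ range (e+1+1), (if 2 ≤ c ∧ q = d+2 then chebP r (e+1-c) * f (e+1-c) else 0)
        = 0 := by
      apply Finset.sum_eq_zero
      intro c hc
      rw [if_neg (by simp [hqd])]
    rw [htail, hA, hB, if_neg hqd]
    -- case split on q
    rcases Nat.lt_or_ge q 2 with hq2 | hq2
    · interval_cases q
      · -- q = 0
        rw [if_pos rfl, if_pos (by omega : (0:ℕ) < d+2),
            if_neg (by omega : ¬ ((0:ℕ)-1 < d+2 ∧ 1 ≤ 0)), if_neg (by omega : ¬ ((0:ℕ)-2 < d+2 ∧ 2 ≤ 0))]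
        rw [show k-0 = k from by omega]
        rw [Hs_one k f r (e+1) (by omega), show e+1+1 = e+2 from rfl]
        have h1 := cheb_rec r e
        linear_combination f k * h1
      · -- q = 1
        rw [if_neg (by omega : ¬ (1:ℕ) = 0), if_pos rfl, if_pos (by omega : (1:ℕ) < d+2),
            if_pos (by constructor <;> omega : (1:ℕ)-1 < d+2 ∧ 1 ≤ 1),
            if_neg (by omega : ¬ ((1:ℕ)-2 < d+2 ∧ 2 ≤ 1))]
        rw [show (1:ℕ)-1 = 0 from rfl, if_neg (by omega : ¬ (0:ℕ)+1 = d+2)]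
        rw [show (0:ℕ)+1 = 1 from rfl, show (1:ℕ)+1 = 2 from rfl]
        rw [Hs_one k f r (e+1) (by omega), Hs_two k f r (e+1) (by omega)]
        rw [show e+1+1 = e+2 from rfl, show e+1+2 = e+3 from rfl]
        linear_combination f (k-1) * cheb_rec r e + f k * cheb_rec r (e+1)
    · -- 2 ≤ q ≤ d+1
      obtain ⟨q', rfl⟩ : ∃ q', q = q'+2 := ⟨q-2, by omega⟩
      rw [if_neg (by omega : ¬ q'+2 = 0), if_neg (by omega : ¬ q'+2 = 1)]
      rw [if_pos (by omega : q'+2 < d+2), if_pos (by constructor <;> omega : q'+2-1 < d+2 ∧ 1 ≤ q'+2),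
          if_pos (by constructor <;> omega : q'+2-2 < d+2 ∧ 2 ≤ q'+2)]
      rw [show q'+2-1 = q'+1 from by omega, show q'+2-2 = q' from by omega]
      rw [if_neg (by omega : ¬ q'+1+1 = d+2)]
      have hrec := Hs_rec k f r e (q'+2) (by omega)
      have hsucc := Hs_succ k f r e (q'+1) (by omega)
      rw [show k-1-(q'+2) = k-(q'+2+1) from by omega, show k-(q'+2) = k-(q'+1+1) from by omega]
      rw [show q'+1+1 = q'+2 from rfl] at hsucc
      rw [show q'+2+1 = q'+3 from rfl] at hrec
      rw [show q'+2+1 = q'+3 from rfl]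
      linear_combination hrec + hsucc
end Row1

section Col1
open Finset

lemma scalar_col1 (k e d r : ℕ) (hkd : k = e+4+d) (f : ℕ → Polynomial ℂ) (c : ℕ)
    (hc : c < e+2) :
    (∑ q ∈ range (d+3), chebP 2 (d+2-q) *
      (if c = 0 then (if q = 0 then 2*X*f k + f (k-1) else if q = 1 then f (k-2) - f k
          else f (k-1-q))
       else if c = 1 then (if q = d+2 then f (e+1-1) - f (e+1+1) else -f (k-q))
       else if q = d+2 then f (e+1-c) else 0))
    + (∑ q ∈ range (e+1), -(Hs k f 2 0 (d+3+q)) *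
        (if c = q then (1:Polynomial ℂ)
          else if c = q+1 then (if q+1 = e+1 then -chebP r 1 else -(2*X))
          else if c = q+2 then 1 else 0))
    = if c = e+1 then Pf k f r else 0 := by
  have e20 : chebP 2 0 = 1 := by rw [chebP]
  by_cases hce : c = e+1
  · subst hce
    rw [if_pos rfl]
    -- second sum
    have hsplit2 : ∀ q ∈ range (e+1), -(Hs k f 2 0 (d+3+q)) *
        (if e+1 = q then (1:Polynomial ℂ)
          else if e+1 = q+1 then (if q+1 = e+1 then -chebP r 1 else -(2*X))
          else if e+1 = q+2 then 1 else 0)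
        = (if q = e then -(Hs k f 2 0 (d+3+q)) * -chebP r 1 else 0)
          + (if q = e-1 ∧ 1 ≤ e then -(Hs k f 2 0 (d+3+q)) else 0) := by
      intro q hq
      simp only [mem_range] at hq
      split_ifs <;> (try (exfalso; first | assumption | omega)) <;> ring
    rw [Finset.sum_congr rfl hsplit2, Finset.sum_add_distrib, sumCollapse, sumCollapse2]
    rw [if_pos (by omega : e < e+1)]
    have hL4 := L4 k f (by omega) r
    -- first sum
    rcases Nat.eq_zero_or_pos e with he | he
    · subst he
      -- c = 1 = ε case
      have hc1 : ∀ q ∈ range (d+3), chebP 2 (d+2-q) *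
          (if (0:ℕ)+1 = 0 then (if q = 0 then 2*X*f k + f (k-1) else if q = 1 then f (k-2) - f k
              else f (k-1-q))
           else if (0:ℕ)+1 = 1 then (if q = d+2 then f (0+1-1) - f (0+1+1) else -f (k-q))
           else if q = d+2 then f (0+1-(0+1)) else 0)
          = chebP 2 (d+2-q) * (if q = d+2 then f 0 - f 2 else -f (k-q)) := by
        intro q hq
        norm_num
      rw [Finset.sum_congr rfl hc1]
      rw [Finset.sum_range_succ]
      rw [if_pos rfl, show d+2-(d+2) = 0 from by omega, e20, one_mul]
      have hstep : ∀ q ∈ range (d+2), chebP 2 (d+2-q) * (if q = d+2 then f 0 - f 2 else -f (k-q))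
          = (fun j => chebP 2 (j+1) * -f (3+j)) (d+2-1-q) := by
        intro q hq
        simp only [mem_range] at hq
        rw [if_neg (by omega)]
        simp only
        rw [show d+2-1-q+1 = d+2-q from by omega, show 3+(d+2-1-q) = k-q from by omega]
      rw [Finset.sum_congr rfl hstep, Finset.sum_range_reflect (fun j => chebP 2 (j+1) * -f (3+j)) (d+2)]
      -- relate to Hs k f 2 0 (k-2)
      have hHs2 : Hs k f 2 0 (k-2) = (∑ j ∈ range (d+2), chebP 2 (j+1) * f (3+j)) + f 2 := by
        unfold Hs
        rw [show k-2+1 = d+3 from by omega]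
        rw [Finset.sum_range_succ' (fun j => chebP 2 (0+j) * f (k-(k-2)+j)) (d+2)]
        congr 1
        · apply Finset.sum_congr rfl
          intro j hj
          rw [show 0+(j+1) = j+1 from by omega, show k-(k-2)+(j+1) = 3+j from by omega]
        · rw [show (0:ℕ)+0 = 0 from rfl, show k-(k-2)+0 = 2 from by omega, e20, one_mul]
      have hHs1 : Hs k f 2 0 (d+3+0) = Hs k f 2 0 (k-1) := by
        rw [show d+3+0 = k-1 from by omega]
      rw [if_neg (by omega : ¬ ((0:ℕ)-1 < 0+1 ∧ 1 ≤ 0))]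
      rw [show d+3+0 = k-1 from by omega]
      have hneg : ∑ j ∈ range (d+2), chebP 2 (j+1) * -f (3+j)
          = -∑ j ∈ range (d+2), chebP 2 (j+1) * f (3+j) := by
        rw [← Finset.sum_neg_distrib]
        apply Finset.sum_congr rfl
        intro j hj
        ring
      rw [hneg]
      linear_combination hL4 + hHs2
    · -- c = ε ≥ 2 case
      obtain ⟨e', rfl⟩ : ∃ e', e = e'+1 := ⟨e-1, by omega⟩
      have hc2 : ∀ q ∈ range (d+3), chebP 2 (d+2-q) *
          (if e'+1+1 = 0 then (if q = 0 then 2*X*f k + f (k-1) else if q = 1 then f (k-2) - f k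
              else f (k-1-q))
           else if e'+1+1 = 1 then (if q = d+2 then f (e'+1+1-1) - f (e'+1+1+1) else -f (k-q))
           else if q = d+2 then f (e'+1+1-(e'+1+1)) else 0)
          = (if q = d+2 then chebP 2 (d+2-q) * f 0 else 0) := by
        intro q hq
        rw [if_neg (by omega), if_neg (by omega), show e'+1+1-(e'+1+1) = 0 from by omega]
        split_ifs <;> ring
      rw [Finset.sum_congr rfl hc2, sumCollapse]
      rw [if_pos (by omega : d+2 < d+3), show d+2-(d+2) = 0 from by omega, e20, one_mul]
      rw [if_pos (by constructor <;> omega : e'+1-1 < e'+1+1 ∧ 1 ≤ e'+1)]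
      rw [show e'+1-1 = e' from by omega]
      rw [show d+3+(e'+1) = k-1 from by omega, show d+3+e' = k-2 from by omega]
      linear_combination hL4
  · rw [if_neg hce]
    -- RHS = 0 cases
    rcases Nat.lt_or_ge c 2 with hc2 | hc2
    · interval_cases c
      · -- c = 0
        have hs2 : ∀ q ∈ range (e+1), -(Hs k f 2 0 (d+3+q)) *
            (if (0:ℕ) = q then (1:Polynomial ℂ)
              else if (0:ℕ) = q+1 then (if q+1 = e+1 then -chebP r 1 else -(2*X))
              else if (0:ℕ) = q+2 then 1 else 0)
            = (if q = 0 then -(Hs k f 2 0 (d+3+q)) else 0) := by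
          intro q hq
          split_ifs <;> (try (exfalso; first | assumption | omega)) <;> ring
        rw [Finset.sum_congr rfl hs2, sumCollapse, if_pos (by omega : 0 < e+1)]
        rw [show d+3+0 = d+3 from rfl]
        -- first sum: peel q=0,1
        have hs1 : ∀ q ∈ range (d+3), chebP 2 (d+2-q) *
            (if (0:ℕ) = 0 then (if q = 0 then 2*X*f k + f (k-1) else if q = 1 then f (k-2) - f k
                else f (k-1-q))
             else if (0:ℕ) = 1 then (if q = d+2 then f (e+1-1) - f (e+1+1) else -f (k-q))
             else if q = d+2 then f (e+1-0) else 0)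
            = chebP 2 (d+2-q) * (if q = 0 then 2*X*f k + f (k-1) else if q = 1 then f (k-2) - f k
                else f (k-1-q)) := by
          intro q hq
          norm_num
        set F : ℕ → Polynomial ℂ := fun q => chebP 2 (d+2-q) *
            (if q = 0 then 2*X*f k + f (k-1) else if q = 1 then f (k-2) - f k
              else f (k-1-q)) with hF
        have hs1' : ∀ q ∈ range (d+3), chebP 2 (d+2-q) *
            (if q = 0 then 2*X*f k + f (k-1) else if q = 1 then f (k-2) - f k
                else f (k-1-q)) = F q := by
          intro q hq
          rw [hF]
        rw [Finset.sum_congr rfl (fun q hq => (hs1 q hq).trans (hs1' q hq))]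
        rw [Finset.sum_range_succ' F (d+2), Finset.sum_range_succ' (fun q => F (q+1)) (d+1)]
        have hF0 : F 0 = chebP 2 (d+2) * (2*X*f k + f (k-1)) := by
          rw [hF]; norm_num
        have hF1 : F (0+1) = chebP 2 (d+1) * (f (k-2) - f k) := by
          rw [hF]
          norm_num [show d+2-1 = d+1 from by omega]
        have htail : ∀ q ∈ range (d+1), F (q+1+1)
            = (fun j => chebP 2 j * f (e+1+j)) (d+1-1-q) := by
          intro q hq
          simp only [mem_range] at hq
          rw [hF]
          simp only
          rw [if_neg (by omega), if_neg (by omega)]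
          rw [show d+2-(q+1+1) = d+1-1-q from by omega, show e+1+(d+1-1-q) = k-1-(q+1+1) from by omega]
        rw [hF0, hF1, Finset.sum_congr rfl htail, Finset.sum_range_reflect (fun j => chebP 2 j * f (e+1+j)) (d+1)]
        have hHs : Hs k f 2 0 (d+3) = (∑ j ∈ range (d+1), chebP 2 j * f (e+1+j))
            + chebP 2 (d+1) * f (k-2) + chebP 2 (d+2) * f (k-1) + chebP 2 (d+3) * f k := by
          unfold Hs
          rw [Finset.sum_range_succ _ (d+3), Finset.sum_range_succ _ (d+2), Finset.sum_range_succ _ (d+1)]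
          rw [show (0:ℕ)+(d+1) = d+1 from by omega, show (0:ℕ)+(d+2) = d+2 from by omega,
              show (0:ℕ)+(d+3) = d+3 from by omega,
              show k-(d+3)+(d+1) = k-2 from by omega, show k-(d+3)+(d+2) = k-1 from by omega,
              show k-(d+3)+(d+3) = k from by omega]
          have : ∀ j ∈ range (d+1), chebP 2 (0+j) * f (k-(d+3)+j) = chebP 2 j * f (e+1+j) := by
            intro j hj
            rw [show (0:ℕ)+j = j from by omega, show k-(d+3)+j = e+1+j from by omega]
          rw [Finset.sum_congr rfl this]
        rw [hHs]
        linear_combination f k * cheb_rec 2 (d+1)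
      · -- c = 1 (with e ≥ 1 since c ≠ e+1)
        have he : 1 ≤ e := by omega
        have hs2 : ∀ q ∈ range (e+1), -(Hs k f 2 0 (d+3+q)) *
            (if (1:ℕ) = q then (1:Polynomial ℂ)
              else if (1:ℕ) = q+1 then (if q+1 = e+1 then -chebP r 1 else -(2*X))
              else if (1:ℕ) = q+2 then 1 else 0)
            = (if q = 1 then -(Hs k f 2 0 (d+3+q)) else 0)
              + (if q = 0 then -(Hs k f 2 0 (d+3+q)) * -(2*X) else 0) := by
          intro q hq
          split_ifs <;> (try (exfalso; first | assumption | omega)) <;> ring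
        rw [Finset.sum_congr rfl hs2, Finset.sum_add_distrib, sumCollapse, sumCollapse,
            if_pos (by omega : 1 < e+1), if_pos (by omega : 0 < e+1)]
        rw [show d+3+1 = d+4 from rfl, show d+3+0 = d+3 from rfl]
        have hs1 : ∀ q ∈ range (d+3), chebP 2 (d+2-q) *
            (if (1:ℕ) = 0 then (if q = 0 then 2*X*f k + f (k-1) else if q = 1 then f (k-2) - f k
                else f (k-1-q))
             else if (1:ℕ) = 1 then (if q = d+2 then f (e+1-1) - f (e+1+1) else -f (k-q))
             else if q = d+2 then f (e+1-1) else 0)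
            = chebP 2 (d+2-q) * (if q = d+2 then f e - f (e+2) else -f (k-q)) := by
          intro q hq
          rw [if_neg (by omega), if_pos rfl, show e+1-1 = e from by omega, show e+1+1 = e+2 from rfl]
        rw [Finset.sum_congr rfl hs1, Finset.sum_range_succ]
        rw [if_pos rfl, show d+2-(d+2) = 0 from by omega, e20, one_mul]
        have hstep : ∀ q ∈ range (d+2), chebP 2 (d+2-q) * (if q = d+2 then f e - f (e+2) else -f (k-q))
            = (fun j => chebP 2 (j+1) * -f (e+3+j)) (d+2-1-q) := by
          intro q hq
          simp only [mem_range] at hq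
          rw [if_neg (by omega)]
          simp only
          rw [show d+2-1-q+1 = d+2-q from by omega, show e+3+(d+2-1-q) = k-q from by omega]
        rw [Finset.sum_congr rfl hstep,
            Finset.sum_range_reflect (fun j => chebP 2 (j+1) * -f (e+3+j)) (d+2)]
        have h0 := Hs0_rec k f (d+3) (by omega) (by omega)
        rw [show k-(d+3+1) = e from by omega, show d+3+1 = d+4 from rfl,
            show d+3-1 = d+2 from by omega] at h0
        have hHs : Hs k f 2 0 (d+2) = (∑ j ∈ range (d+2), chebP 2 (j+1) * f (e+3+j)) + f (e+2) := by
          unfold Hs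
          rw [Finset.sum_range_succ' (fun j => chebP 2 (0+j) * f (k-(d+2)+j)) (d+2)]
          congr 1
          · apply Finset.sum_congr rfl
            intro j hj
            rw [show (0:ℕ)+(j+1) = j+1 from by omega, show k-(d+2)+(j+1) = e+3+j from by omega]
          · rw [show (0:ℕ)+0 = 0 from rfl, show k-(d+2)+0 = e+2 from by omega, e20, one_mul]
        rw [hHs] at h0
        have hneg : ∑ j ∈ range (d+2), chebP 2 (j+1) * -f (e+3+j)
            = -∑ j ∈ range (d+2), chebP 2 (j+1) * f (e+3+j) := by
          rw [← Finset.sum_neg_distrib]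
          exact Finset.sum_congr rfl fun j hj => by ring
        rw [hneg]
        linear_combination h0
    · -- 2 ≤ c ≤ e
      have hce' : c ≤ e := by omega
      have hs1 : ∀ q ∈ range (d+3), chebP 2 (d+2-q) *
          (if c = 0 then (if q = 0 then 2*X*f k + f (k-1) else if q = 1 then f (k-2) - f k
              else f (k-1-q))
           else if c = 1 then (if q = d+2 then f (e+1-1) - f (e+1+1) else -f (k-q))
           else if q = d+2 then f (e+1-c) else 0)
          = (if q = d+2 then chebP 2 (d+2-q) * f (e+1-c) else 0) := by
        intro q hq
        rw [if_neg (by omega), if_neg (by omega)]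
        split_ifs <;> ring
      rw [Finset.sum_congr rfl hs1, sumCollapse, if_pos (by omega : d+2 < d+3),
          show d+2-(d+2) = 0 from by omega, e20, one_mul]
      have hs2 : ∀ q ∈ range (e+1), -(Hs k f 2 0 (d+3+q)) *
          (if c = q then (1:Polynomial ℂ)
            else if c = q+1 then (if q+1 = e+1 then -chebP r 1 else -(2*X))
            else if c = q+2 then 1 else 0)
          = (if q = c then -(Hs k f 2 0 (d+3+q)) else 0)
            + (if q = c-1 then -(Hs k f 2 0 (d+3+q)) * -(2*X) else 0)
            + (if q = c-2 then -(Hs k f 2 0 (d+3+q)) else 0) := by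
        intro q hq
        simp only [mem_range] at hq
        split_ifs <;> (try (exfalso; first | assumption | omega)) <;> ring
      rw [Finset.sum_congr rfl hs2, Finset.sum_add_distrib, Finset.sum_add_distrib,
          sumCollapse, sumCollapse, sumCollapse,
          if_pos (by omega : c < e+1), if_pos (by omega : c-1 < e+1), if_pos (by omega : c-2 < e+1)]
      have h0 := Hs0_rec k f (d+3+c-1) (by omega) (by omega)
      rw [show k-(d+3+c-1+1) = e+1-c from by omega, show d+3+c-1+1 = d+3+c from by omega,
          show d+3+c-1-1 = d+3+(c-2) from by omega, show d+3+c-1 = d+3+(c-1) from by omega] at h0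
      linear_combination h0
end Col1

section Bridge
open Finset

lemma collapseR {n : ℕ} (t : Fin n) (g : Fin n → Polynomial ℂ) (A : Polynomial ℂ) :
    ∑ j : Fin n, g j * (A * if j = t then 1 else 0) = g t * A := by
  have h : ∀ j ∈ Finset.univ, g j * (A * if j = t then 1 else 0)
      = if j = t then g t * A else 0 := by
    intro j _
    by_cases hj : j = t
    · subst hj; simp [mul_comm]
    · simp [hj]
  rw [Finset.sum_congr rfl h, Finset.sum_ite_eq' Finset.univ t fun _ => g t * A]
  simp

lemma collapseL {n : ℕ} (s : Fin n) (g : Fin n → Polynomial ℂ) (A : Polynomial ℂ) :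
    ∑ j : Fin n, (A * if s = j then 1 else 0) * g j = A * g s := by
  have h : ∀ j ∈ Finset.univ, (A * if s = j then 1 else 0) * g j
      = if s = j then A * g s else 0 := by
    intro j _
    by_cases hj : s = j
    · subst hj; simp
    · simp [hj]
  rw [Finset.sum_congr rfl h, Finset.sum_ite_eq Finset.univ s fun _ => A * g s]
  simp

lemma collapseM {n : ℕ} (s : Fin n) (g : Fin n → Polynomial ℂ) (A : Polynomial ℂ) :
    ∑ j : Fin n, (A * if j = s then 1 else 0) * g j = A * g s := by
  have h : ∀ j ∈ Finset.univ, (A * if j = s then 1 else 0) * g j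
      = if j = s then A * g s else 0 := by
    intro j _
    by_cases hj : j = s
    · subst hj; simp
    · simp [hj]
  rw [Finset.sum_congr rfl h, Finset.sum_ite_eq' Finset.univ s fun _ => A * g s]
  simp

lemma collapseD {n : ℕ} (x t : Fin n) (A B : Polynomial ℂ) :
    ∑ j : Fin n, (A * if x = j then 1 else 0) * (B * if j = t then 1 else 0)
      = (A * B) * (if x = t then 1 else 0) := by
  have h : ∀ j ∈ Finset.univ, (A * if x = j then 1 else 0) * (B * if j = t then 1 else 0)
      = if x = j then (A * B) * (if x = t then 1 else 0) else 0 := by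
    intro j _
    by_cases hj : x = j
    · subst hj
      by_cases ht : x = t
      · subst ht; simp
      · simp [ht]
    · simp [hj]
  rw [Finset.sum_congr rfl h, Finset.sum_ite_eq Finset.univ x
    fun _ => (A * B) * (if x = t then 1 else 0)]
  simp

lemma collapseE {n : ℕ} (s t : Fin n) (A B : Polynomial ℂ) :
    ∑ j : Fin n, (A * if s = j then 1 else 0) * (B * if t = j then 1 else 0)
      = (A * B) * (if s = t then 1 else 0) := by
  have h : ∀ j ∈ Finset.univ, (A * if s = j then 1 else 0) * (B * if t = j then 1 else 0)
      = if s = j then (A * B) * (if s = t then 1 else 0) else 0 := by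
    intro j _
    by_cases hj : s = j
    · subst hj
      by_cases ht : t = s
      · subst ht; simp
      · have hts : ¬ s = t := fun hh => ht hh.symm
        simp [ht, hts]
    · simp [hj]
  rw [Finset.sum_congr rfl h, Finset.sum_ite_eq Finset.univ s
    fun _ => (A * B) * (if s = t then 1 else 0)]
  simp

lemma PHC_entry (r k m n : ℕ) (P : ℕ → Matrix (Fin m) (Fin n) ℂ) (e i : ℕ)
    (x : Fin m) (t : Fin n) :
    PHC r k m n P e i x t = Hs k (fun j => Polynomial.C (P j x t)) r e i := by
  unfold PHC Hs
  rw [Matrix.sum_apply]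
  apply Finset.sum_congr rfl
  intro j _
  simp [Matrix.smul_apply, smul_eq_mul, Matrix.map_apply]

lemma PmatC_entry (r k m n : ℕ) (P : ℕ → Matrix (Fin m) (Fin n) ℂ)
    (x : Fin m) (t : Fin n) :
    PmatC r k m n P x t = Pf k (fun j => Polynomial.C (P j x t)) r := by
  unfold PmatC Pf
  rw [Matrix.sum_apply]
  apply Finset.sum_congr rfl
  intro j _
  simp [Matrix.smul_apply, smul_eq_mul, Matrix.map_apply]
end Bridge

/-- One-sided factorizations of the colleague Chebyshev pencil:
`C_P^{r,ε}(λ) H_C^ε(λ) = e_{k-ε} ⊗ P(λ)` and `G_C^ε(λ) C_P^{r,ε}(λ) = e_{ε+1}^T ⊗ P(λ)`. -/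
theorem chebyshev_one_sided_factorizations
    (k ε m n : ℕ) (hk : 4 ≤ k) (hε1 : 1 ≤ ε) (hε2 : ε ≤ k - 3) (hm : 0 < m) (hn : 0 < n)
    (r : ℕ) (hr : r = 1 ∨ r = 2)
    (P : ℕ → Matrix (Fin m) (Fin n) ℂ) :
    CPre r k ε m n P * HC r k ε m n P =
      (Matrix.of fun p t =>
        match p with
        | Sum.inl q => if (q.1 : ℕ) = k - ε - 1 then PmatC r k m n P q.2 t else 0
        | Sum.inr _ => 0) ∧
    GC k ε m n P * CPre r k ε m n P =
      (Matrix.of fun s p =>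
        match p with
        | Sum.inl q => if (q.1 : ℕ) = ε then PmatC r k m n P s q.2 else 0
        | Sum.inr _ => 0) := by
  obtain ⟨e, rfl⟩ : ∃ e, ε = e+1 := ⟨ε-1, by omega⟩
  obtain ⟨d, hd⟩ : ∃ d, k = e+4+d := ⟨k-(e+4), by omega⟩
  constructor
  · apply Matrix.ext
    intro p t
    rcases p with ⟨q, x⟩ | ⟨q, x⟩
    · rw [Matrix.mul_apply, Fintype.sum_sum_type]
      simp only [Fintype.sum_prod_type, CPre, HC, MC, KC, Matrix.fromBlocks_apply₁₁,
        Matrix.fromBlocks_apply₁₂, Matrix.transpose_apply, Matrix.of_apply]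
      simp only [collapseR]
      conv_lhs =>
        enter [2, 2, x_1]
        rw [collapseM x (fun j => -PHC r k m n P (e+1) ((x_1:ℕ)+1) j t)
          ((if (q:ℕ) = (x_1:ℕ) then 1
              else if (q:ℕ) = (x_1:ℕ) + 1 then (if (x_1:ℕ) + 1 = k - 1 - (e + 1) then -chebP 2 1 else -(2 * X))
              else if (q:ℕ) = (x_1:ℕ) + 2 then 1 else 0))]
      rw [Fin.sum_univ_eq_sum_range (fun c =>
        (if c = 0 then
            (if (q:ℕ) = 0 then 2 * X * C (P k x t) + C (P (k - 1) x t)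
             else if (q:ℕ) = 1 then C (P (k - 2) x t) - C (P k x t)
             else C (P (k - 1 - (q:ℕ)) x t))
          else if c = 1 then
            (if (q:ℕ) = k - (e + 1) - 1 then C (P (e + 1 - 1) x t) - C (P (e + 1 + 1) x t)
             else -C (P (k - (q:ℕ)) x t))
          else if (q:ℕ) = k - (e + 1) - 1 then C (P (e + 1 - c) x t) else 0) *
          chebP r (e + 1 - c)) (e+1+1)]
      rw [Fin.sum_univ_eq_sum_range (fun c =>
        (if (q:ℕ) = c then (1:Polynomial ℂ)
          else if (q:ℕ) = c + 1 then (if c + 1 = k - 1 - (e + 1) then -chebP 2 1 else -(2 * X))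
          else if (q:ℕ) = c + 2 then 1 else 0) *
          -PHC r k m n P (e + 1) (c + 1) x t) (k-1-(e+1))]
      simp only [PHC_entry, PmatC_entry, show k-(e+1)-1 = d+2 from by omega,
        show k-1-(e+1) = d+2 from by omega]
      exact scalar_row1 k e d r hd (fun i => C (P i x t)) (q:ℕ) (by have := q.isLt; omega)
    · rw [Matrix.mul_apply, Fintype.sum_sum_type]
      simp only [Fintype.sum_prod_type, CPre, HC, MC, KC, Matrix.fromBlocks_apply₂₁,
        Matrix.fromBlocks_apply₂₂, Matrix.transpose_apply, Matrix.of_apply,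
        Matrix.zero_apply, zero_mul, Finset.sum_const_zero, add_zero]
      conv_lhs =>
        enter [2, x_1]
        rw [collapseD x t
          ((if (x_1:ℕ) = (q:ℕ) then (1:Polynomial ℂ)
            else if (x_1:ℕ) = (q:ℕ)+1 then (if (q:ℕ)+1 = e+1 then -chebP r 1 else -(2*X))
            else if (x_1:ℕ) = (q:ℕ)+2 then 1 else 0))
          (chebP r (e+1-(x_1:ℕ)))]
      by_cases hxt : x = t
      · subst hxt
        simp only [eq_self_iff_true, if_true, mul_one]
        rw [Fin.sum_univ_eq_sum_range (fun c =>
          (if c = (q:ℕ) then (1:Polynomial ℂ)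
            else if c = (q:ℕ)+1 then (if (q:ℕ)+1 = e+1 then -chebP r 1 else -(2*X))
            else if c = (q:ℕ)+2 then 1 else 0) * chebP r (e+1-c)) (e+1+1)]
        exact scalar_row2 (e+1) r (q:ℕ) q.isLt
      · simp [hxt]
  · apply Matrix.ext
    intro s p
    rcases p with ⟨c, t⟩ | ⟨c, t⟩
    · rw [Matrix.mul_apply, Fintype.sum_sum_type]
      simp only [Fintype.sum_prod_type, CPre, GC, MC, KC, Matrix.fromBlocks_apply₁₁,
        Matrix.fromBlocks_apply₂₁, Matrix.transpose_apply, Matrix.of_apply]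
      conv_lhs =>
        enter [1, 2, x]
        rw [collapseL s (fun j =>
          if (c:ℕ) = 0 then
            (if (x:ℕ) = 0 then 2 * X * C (P k j t) + C (P (k - 1) j t)
             else if (x:ℕ) = 1 then C (P (k - 2) j t) - C (P k j t)
             else C (P (k - 1 - (x:ℕ)) j t))
          else if (c:ℕ) = 1 then
            (if (x:ℕ) = k - (e + 1) - 1 then C (P (e + 1 - 1) j t) - C (P (e + 1 + 1) j t)
             else -C (P (k - (x:ℕ)) j t))
          else if (x:ℕ) = k - (e + 1) - 1 then C (P (e + 1 - (c:ℕ)) j t) else 0)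
          (chebP 2 (k - (e + 1) - 1 - (x:ℕ)))]
      conv_lhs =>
        enter [2, 2, x]
        rw [collapseR t (fun j => -PHC 2 k m n P 0 (k - (e + 1) + (x:ℕ)) s j)
          ((if (c:ℕ) = (x:ℕ) then (1:Polynomial ℂ)
            else if (c:ℕ) = (x:ℕ) + 1 then (if (x:ℕ) + 1 = e + 1 then -chebP r 1 else -(2 * X))
            else if (c:ℕ) = (x:ℕ) + 2 then 1 else 0))]
      rw [Fin.sum_univ_eq_sum_range (fun q =>
        chebP 2 (k - (e + 1) - 1 - q) *
          (if (c:ℕ) = 0 then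
            (if q = 0 then 2 * X * C (P k s t) + C (P (k - 1) s t)
             else if q = 1 then C (P (k - 2) s t) - C (P k s t)
             else C (P (k - 1 - q) s t))
          else if (c:ℕ) = 1 then
            (if q = k - (e + 1) - 1 then C (P (e + 1 - 1) s t) - C (P (e + 1 + 1) s t)
             else -C (P (k - q) s t))
          else if q = k - (e + 1) - 1 then C (P (e + 1 - (c:ℕ)) s t) else 0)) (k-(e+1))]
      rw [Fin.sum_univ_eq_sum_range (fun q =>
        -PHC 2 k m n P 0 (k - (e + 1) + q) s t *
          (if (c:ℕ) = q then (1:Polynomial ℂ)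
            else if (c:ℕ) = q + 1 then (if q + 1 = e + 1 then -chebP r 1 else -(2 * X))
            else if (c:ℕ) = q + 2 then 1 else 0)) (e+1)]
      simp only [PHC_entry, PmatC_entry, show k-(e+1)-1 = d+2 from by omega]
      simp only [show k-(e+1) = d+3 from by omega]
      exact scalar_col1 k e d r hd (fun i => C (P i s t)) (c:ℕ) c.isLt
    · rw [Matrix.mul_apply, Fintype.sum_sum_type]
      simp only [Fintype.sum_prod_type, CPre, GC, MC, KC, Matrix.fromBlocks_apply₁₂,
        Matrix.fromBlocks_apply₂₂, Matrix.transpose_apply, Matrix.of_apply,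
        Matrix.zero_apply, mul_zero, Finset.sum_const_zero, add_zero]
      conv_lhs =>
        enter [2, x]
        rw [collapseE s t (chebP 2 (k - (e + 1) - 1 - (x:ℕ)))
          ((if (x:ℕ) = (c:ℕ) then (1:Polynomial ℂ)
            else if (x:ℕ) = (c:ℕ) + 1 then (if (c:ℕ) + 1 = k - 1 - (e + 1) then -chebP 2 1 else -(2 * X))
            else if (x:ℕ) = (c:ℕ) + 2 then 1 else 0))]
      by_cases hst : s = t
      · subst hst
        simp only [eq_self_iff_true, if_true, mul_one]
        rw [Fin.sum_univ_eq_sum_range (fun q =>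
          chebP 2 (k - (e + 1) - 1 - q) *
            (if q = (c:ℕ) then (1:Polynomial ℂ)
              else if q = (c:ℕ) + 1 then (if (c:ℕ) + 1 = k - 1 - (e + 1) then -chebP 2 1 else -(2 * X))
              else if q = (c:ℕ) + 2 then 1 else 0)) (k-(e+1))]
        exact scalar_col2 k (e+1) (by omega) (by omega) (c:ℕ) c.isLt
      · simp [hst]
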